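/- arXiv:1906.06182 — 2 statements merged into one kernel-verified Lean document; each statement's English description precedes it below -/
import Mathlib

section
/- Assume the Herglotz field setup and let ξ : ℝ^d → ℝ^d and η : ℝ^d → ℝ be of class C¹. Suppose φ satisfies the generalized Euler–Lagrange equation, the infinitesimal invariance condition holds (for all x: Σ_ν (∂L/∂x^ν)(z(x)) ξ^ν(x) + (∂L/∂u)(z(x)) η(x) + Σ_ν (∂L/∂p_ν)(z(x)) ( ∂_ν η(x) − Σ_μ ∂_μ φ(x) ∂_ν ξ^μ(x) ) + L(z(x)) Σ_ν ∂_ν ξ^ν(x) = 0), and the canonical gauge condition holds: for all ν and x, ∂_ν f(x) Σ_μ ∂_μ s^μ(x) = Σ_μ ∂_μ f(x) ∂_ν s^μ(x). Then the current J^ν(x) := ( (∂L/∂p_ν)(z(x)) η(x) + L(z(x)) ξ^ν(x) − (∂L/∂p_ν)(z(x)) Σ_μ ∂_μ φ(x) ξ^μ(x) ) e^{−f(x)} is divergence-free: Σ_ν ∂_ν J^ν(x) = 0 for all x (Generalized Noether Theorem). -/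
/-! Write `J^ν = K^ν e^{-f}` with `K^ν = L_{p_ν} (η - ∇φ·ξ) + L ξ^ν`, so that
`∂_ν J^ν = (∂_ν K^ν - ∂_ν f K^ν) e^{-f}`. In the chain rule for `∂_ν (L ∘ z)` the contribution
`Σ_μ L_{s_μ} ∂_ν s^μ = Σ_μ ∂_μ f ∂_ν s^μ` of the action variable equals `∂_ν f · L` by the
gauge condition and the Herglotz equation, and so cancels the term `-∂_ν f L ξ^ν`. The mixed
second derivatives of `φ` cancel by their symmetry, and what is left is `(η - ∇φ·ξ)` times the
generalized Euler–Lagrange expression plus the invariance condition, both of which vanish. -/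

/-- Partial derivative `∂_ν g` of a scalar field on `ℝ^d`. -/
noncomputable def pd {d : ℕ} (g : (Fin d → ℝ) → ℝ) (ν : Fin d) (x : Fin d → ℝ) : ℝ :=
  fderiv ℝ g x (Pi.single ν 1)

/-- `∂L/∂x^ν` for a Lagrangian `L(x, u, p, s)` on `ℝ^d × ℝ × ℝ^d × ℝ^d`. -/
noncomputable def pLx {d : ℕ} (L : (Fin d → ℝ) × ℝ × (Fin d → ℝ) × (Fin d → ℝ) → ℝ)
    (ν : Fin d) (z : (Fin d → ℝ) × ℝ × (Fin d → ℝ) × (Fin d → ℝ)) : ℝ :=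
  fderiv ℝ (fun y => L (y, z.2.1, z.2.2.1, z.2.2.2)) z.1 (Pi.single ν 1)

/-- `∂L/∂u` for a Lagrangian `L(x, u, p, s)`. -/
noncomputable def pLu {d : ℕ} (L : (Fin d → ℝ) × ℝ × (Fin d → ℝ) × (Fin d → ℝ) → ℝ)
    (z : (Fin d → ℝ) × ℝ × (Fin d → ℝ) × (Fin d → ℝ)) : ℝ :=
  deriv (fun w => L (z.1, w, z.2.2.1, z.2.2.2)) z.2.1

/-- `∂L/∂p_ν` for a Lagrangian `L(x, u, p, s)`. -/
noncomputable def pLp {d : ℕ} (L : (Fin d → ℝ) × ℝ × (Fin d → ℝ) × (Fin d → ℝ) → ℝ)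
    (ν : Fin d) (z : (Fin d → ℝ) × ℝ × (Fin d → ℝ) × (Fin d → ℝ)) : ℝ :=
  fderiv ℝ (fun q => L (z.1, z.2.1, q, z.2.2.2)) z.2.2.1 (Pi.single ν 1)

/-- `∂L/∂s_ν` for a Lagrangian `L(x, u, p, s)`. -/
noncomputable def pLs {d : ℕ} (L : (Fin d → ℝ) × ℝ × (Fin d → ℝ) × (Fin d → ℝ) → ℝ)
    (ν : Fin d) (z : (Fin d → ℝ) × ℝ × (Fin d → ℝ) × (Fin d → ℝ)) : ℝ :=
  fderiv ℝ (fun w => L (z.1, z.2.1, z.2.2.1, w)) z.2.2.2 (Pi.single ν 1)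

section PartialDerivatives

variable {d : ℕ} {g h : (Fin d → ℝ) → ℝ} {x : Fin d → ℝ}

theorem fderiv_apply_eq_sum_mul_pd (v : Fin d → ℝ) :
    fderiv ℝ g x v = ∑ ν, v ν * pd g ν x := by
  conv_lhs => rw [pi_eq_sum_univ' v]
  simp [pd, map_sum]

theorem pd_add (hg : DifferentiableAt ℝ g x) (hh : DifferentiableAt ℝ h x) (ν : Fin d) :
    pd (fun y => g y + h y) ν x = pd g ν x + pd h ν x := by
  simp [pd, fderiv_fun_add hg hh]

theorem pd_sub (hg : DifferentiableAt ℝ g x) (hh : DifferentiableAt ℝ h x) (ν : Fin d) :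
    pd (fun y => g y - h y) ν x = pd g ν x - pd h ν x := by
  simp [pd, fderiv_fun_sub hg hh]

theorem pd_mul (hg : DifferentiableAt ℝ g x) (hh : DifferentiableAt ℝ h x) (ν : Fin d) :
    pd (fun y => g y * h y) ν x = g x * pd h ν x + pd g ν x * h x := by
  simp [pd, fderiv_fun_mul hg hh, mul_comm]

theorem pd_sum {G : Fin d → (Fin d → ℝ) → ℝ} (hG : ∀ μ, DifferentiableAt ℝ (G μ) x) (ν : Fin d) :
    pd (fun y => ∑ μ, G μ y) ν x = ∑ μ, pd (G μ) ν x := by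
  simp [pd, fderiv_fun_sum fun μ _ => hG μ]

theorem pd_mul_exp_neg (hg : DifferentiableAt ℝ g x) (hh : DifferentiableAt ℝ h x) (ν : Fin d) :
    pd (fun y => g y * Real.exp (-h y)) ν x
      = (pd g ν x - pd h ν x * g x) * Real.exp (-h x) := by
  have hexp : HasFDerivAt (fun y => Real.exp (-h y)) (Real.exp (-h x) • -fderiv ℝ h x) x :=
    hh.hasFDerivAt.neg.exp
  rw [pd_mul hg hexp.differentiableAt]
  simp only [pd, hexp.fderiv, smul_apply, neg_apply, smul_eq_mul]
  ring

theorem differentiable_pd {φ : (Fin d → ℝ) → ℝ} (hφ : ContDiff ℝ 2 φ) (μ : Fin d) :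
    Differentiable ℝ (pd φ μ) :=
  ((hφ.fderiv_right (m := 1) le_rfl).differentiable one_ne_zero).clm_apply
    (differentiable_const _)

theorem pd_pd_comm {φ : (Fin d → ℝ) → ℝ} (hφ : ContDiff ℝ 2 φ) (μ ν : Fin d) :
    pd (pd φ μ) ν x = pd (pd φ ν) μ x := by
  have hsymm : IsSymmSndFDerivAt ℝ φ x := hφ.contDiffAt.isSymmSndFDerivAt (by simp)
  have hdiff : DifferentiableAt ℝ (fderiv ℝ φ) x :=
    (hφ.fderiv_right (m := 1) le_rfl).differentiable one_ne_zero x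
  show fderiv ℝ (fun y => fderiv ℝ φ y (Pi.single μ 1)) x (Pi.single ν 1)
    = fderiv ℝ (fun y => fderiv ℝ φ y (Pi.single ν 1)) x (Pi.single μ 1)
  simp only [fderiv_clm_apply hdiff (differentiableAt_const _), fderiv_fun_const,
    Pi.zero_apply, ContinuousLinearMap.comp_zero, zero_add, ContinuousLinearMap.flip_apply]
  exact hsymm _ _

end PartialDerivatives

section Lagrangian

open ContinuousLinearMap

variable {d : ℕ} {L : (Fin d → ℝ) × ℝ × (Fin d → ℝ) × (Fin d → ℝ) → ℝ}

theorem fderiv_lagrangian_apply {w : (Fin d → ℝ) × ℝ × (Fin d → ℝ) × (Fin d → ℝ)}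
    (hL : DifferentiableAt ℝ L w)
    (v : (Fin d → ℝ) × ℝ × (Fin d → ℝ) × (Fin d → ℝ)) :
    fderiv ℝ L w v = (∑ ν, v.1 ν * pLx L ν w) + v.2.1 * pLu L w
      + (∑ ν, v.2.2.1 ν * pLp L ν w) + (∑ ν, v.2.2.2 ν * pLs L ν w) := by
  have hx : fderiv ℝ (fun y => L (y, w.2.1, w.2.2.1, w.2.2.2)) w.1
      = (fderiv ℝ L w).comp (inl ℝ _ _) :=
    (hL.hasFDerivAt.comp w.1 (hasFDerivAt_prodMk_left w.1 w.2)).fderiv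
  have hu : fderiv ℝ (fun t => L (w.1, t, w.2.2.1, w.2.2.2)) w.2.1
      = (fderiv ℝ L w).comp ((inr ℝ _ _).comp (inl ℝ _ _)) :=
    (hL.hasFDerivAt.comp w.2.1 ((hasFDerivAt_prodMk_right w.1 w.2).comp w.2.1
      (hasFDerivAt_prodMk_left w.2.1 w.2.2))).fderiv
  have hp : fderiv ℝ (fun q => L (w.1, w.2.1, q, w.2.2.2)) w.2.2.1
      = (fderiv ℝ L w).comp ((inr ℝ _ _).comp ((inr ℝ _ _).comp (inl ℝ _ _))) :=
    (hL.hasFDerivAt.comp w.2.2.1 ((hasFDerivAt_prodMk_right w.1 w.2).comp w.2.2.1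
      ((hasFDerivAt_prodMk_right w.2.1 w.2.2).comp w.2.2.1
        (hasFDerivAt_prodMk_left w.2.2.1 w.2.2.2)))).fderiv
  have hs : fderiv ℝ (fun q => L (w.1, w.2.1, w.2.2.1, q)) w.2.2.2
      = (fderiv ℝ L w).comp ((inr ℝ _ _).comp ((inr ℝ _ _).comp (inr ℝ _ _))) :=
    (hL.hasFDerivAt.comp w.2.2.2 ((hasFDerivAt_prodMk_right w.1 w.2).comp w.2.2.2
      ((hasFDerivAt_prodMk_right w.2.1 w.2.2).comp w.2.2.2
        (hasFDerivAt_prodMk_right w.2.2.1 w.2.2.2)))).fderiv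
  have hv : v = inl ℝ _ _ v.1 + inr ℝ _ _ (inl ℝ _ _ v.2.1)
      + inr ℝ _ _ (inr ℝ _ _ (inl ℝ _ _ v.2.2.1))
      + inr ℝ _ _ (inr ℝ _ _ (inr ℝ _ _ v.2.2.2)) := by
    ext <;> simp
  calc fderiv ℝ L w v
      = fderiv ℝ (fun y => L (y, w.2.1, w.2.2.1, w.2.2.2)) w.1 v.1
        + fderiv ℝ (fun t => L (w.1, t, w.2.2.1, w.2.2.2)) w.2.1 (v.2.1 • 1)
        + fderiv ℝ (fun q => L (w.1, w.2.1, q, w.2.2.2)) w.2.2.1 v.2.2.1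
        + fderiv ℝ (fun q => L (w.1, w.2.1, w.2.2.1, q)) w.2.2.2 v.2.2.2 := by
        rw [hx, hu, hp, hs, smul_eq_mul, mul_one]
        conv_lhs => rw [hv]
        simp only [map_add, comp_apply]
    _ = _ := by
        rw [map_smul, fderiv_apply_one_eq_deriv, smul_eq_mul]
        simp only [fderiv_apply_eq_sum_mul_pd]
        rfl

theorem pd_lagrangian_comp {u : (Fin d → ℝ) → ℝ} {p s : (Fin d → ℝ) → Fin d → ℝ}
    {x : Fin d → ℝ} (hL : DifferentiableAt ℝ L (x, u x, p x, s x))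
    (hu : DifferentiableAt ℝ u x) (hp : DifferentiableAt ℝ p x) (hs : DifferentiableAt ℝ s x)
    (ν : Fin d) :
    pd (fun y => L (y, u y, p y, s y)) ν x
      = pLx L ν (x, u x, p x, s x) + pd u ν x * pLu L (x, u x, p x, s x)
        + (∑ μ, pd (fun y => p y μ) ν x * pLp L μ (x, u x, p x, s x))
        + (∑ μ, pd (fun y => s y μ) ν x * pLs L μ (x, u x, p x, s x)) := by
  have hσ : HasFDerivAt (fun y => (y, u y, p y, s y))
      ((ContinuousLinearMap.id ℝ _).prod
        ((fderiv ℝ u x).prod ((fderiv ℝ p x).prod (fderiv ℝ s x)))) x :=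
    (hasFDerivAt_id x).prodMk
      (hu.hasFDerivAt.prodMk (hp.hasFDerivAt.prodMk hs.hasFDerivAt))
  have hcomp : HasFDerivAt (fun y => L (y, u y, p y, s y)) _ x := hL.hasFDerivAt.comp x hσ
  rw [pd, hcomp.fderiv, comp_apply, fderiv_lagrangian_apply hL,
    fderiv_pi (differentiableAt_pi.mp hp), fderiv_pi (differentiableAt_pi.mp hs)]
  simp only [ContinuousLinearMap.prod_apply, id_apply, pi_apply, Pi.single_apply, ite_mul,
    one_mul, zero_mul, Finset.sum_ite_eq', Finset.mem_univ, if_true]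
  rfl

end Lagrangian

/-- `P, DP, X, U, Λ, F, W` stand for `L_{p_ν}(z)`, `∂_ν (L_{p_ν} ∘ z)`, `L_{x^ν}(z)`, `L_u(z)`,
`L(z)`, `∂_ν f` and `∂_ν ∂_μ φ`. -/
theorem noether_identity {d : ℕ} {P DP X F Dη ξ Dφ : Fin d → ℝ} {W Dξ : Fin d → Fin d → ℝ}
    {U Λ η : ℝ} (hW : ∀ μ ν, W μ ν = W ν μ)
    (hEL : U - ∑ ν, DP ν + ∑ ν, F ν * P ν = 0)
    (hinv : ∑ ν, X ν * ξ ν + U * η + ∑ ν, P ν * (Dη ν - ∑ μ, Dφ μ * Dξ μ ν)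
      + Λ * ∑ ν, Dξ ν ν = 0) :
    ∑ ν, ((DP ν - F ν * P ν) * (η - ∑ μ, Dφ μ * ξ μ)
      + P ν * (Dη ν - ∑ μ, (Dφ μ * Dξ μ ν + W μ ν * ξ μ))
      + (X ν + Dφ ν * U + ∑ μ, W μ ν * P μ) * ξ ν + Λ * Dξ ν ν) = 0 := by
  have hWsum : ∑ ν, (∑ μ, W μ ν * P μ) * ξ ν = ∑ ν, P ν * ∑ μ, W μ ν * ξ μ := by
    simp only [Finset.sum_mul, Finset.mul_sum]
    rw [Finset.sum_comm]
    refine Finset.sum_congr rfl fun ν _ => Finset.sum_congr rfl fun μ _ => ?_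
    rw [hW]
    ring
  have hsummand : ∀ ν, (DP ν - F ν * P ν) * (η - ∑ μ, Dφ μ * ξ μ)
      + P ν * (Dη ν - ∑ μ, (Dφ μ * Dξ μ ν + W μ ν * ξ μ))
      + (X ν + Dφ ν * U + ∑ μ, W μ ν * P μ) * ξ ν + Λ * Dξ ν ν
      = (η - ∑ μ, Dφ μ * ξ μ) * DP ν - (η - ∑ μ, Dφ μ * ξ μ) * (F ν * P ν)
        + U * (Dφ ν * ξ ν) + X ν * ξ ν + P ν * (Dη ν - ∑ μ, Dφ μ * Dξ μ ν) + Λ * Dξ ν ν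
        + ((∑ μ, W μ ν * P μ) * ξ ν - P ν * ∑ μ, W μ ν * ξ μ) := by
    intro ν
    rw [Finset.sum_add_distrib]
    ring
  rw [Finset.sum_congr rfl fun ν _ => hsummand ν]
  simp only [Finset.sum_add_distrib, Finset.sum_sub_distrib, ← Finset.mul_sum, hWsum,
    sub_self, add_zero]
  linear_combination hinv - (η - ∑ μ, Dφ μ * ξ μ) * hEL

section Herglotz

variable {d : ℕ} {L : (Fin d → ℝ) × ℝ × (Fin d → ℝ) × (Fin d → ℝ) → ℝ}
  {φ f : (Fin d → ℝ) → ℝ} {s : (Fin d → ℝ) → Fin d → ℝ} {x : Fin d → ℝ}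

noncomputable def fieldJet (φ : (Fin d → ℝ) → ℝ) (s : (Fin d → ℝ) → Fin d → ℝ) (x : Fin d → ℝ) :
    (Fin d → ℝ) × ℝ × (Fin d → ℝ) × (Fin d → ℝ) :=
  (x, φ x, fun μ => pd φ μ x, s x)

theorem differentiableAt_fieldJet (hφ : ContDiff ℝ 2 φ) (hs : DifferentiableAt ℝ s x) :
    DifferentiableAt ℝ (fieldJet φ s) x :=
  differentiableAt_id.prodMk ((hφ.differentiable two_ne_zero x).prodMk
    ((differentiableAt_pi.mpr fun μ => differentiable_pd hφ μ x).prodMk hs))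

theorem sum_pd_mul_pLs_eq_of_gauge {w : (Fin d → ℝ) × ℝ × (Fin d → ℝ) × (Fin d → ℝ)} {ν : Fin d}
    (herglotz : ∑ μ, pd (fun y => s y μ) μ x = L w)
    (hgrad : ∀ μ, pLs L μ w = pd f μ x)
    (hgauge : pd f ν x * ∑ μ, pd (fun y => s y μ) μ x
      = ∑ μ, pd f μ x * pd (fun y => s y μ) ν x) :
    ∑ μ, pd (fun y => s y μ) ν x * pLs L μ w = pd f ν x * L w := by
  simp_rw [hgrad, mul_comm (pd (fun y => s y _) ν x)]
  rw [← hgauge, herglotz]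

theorem pd_lagrangian_fieldJet (hL : DifferentiableAt ℝ L (fieldJet φ s x))
    (hφ : ContDiff ℝ 2 φ) (hs : DifferentiableAt ℝ s x)
    (herglotz : ∑ μ, pd (fun y => s y μ) μ x = L (fieldJet φ s x))
    (hgrad : ∀ μ, pLs L μ (fieldJet φ s x) = pd f μ x) {ν : Fin d}
    (hgauge : pd f ν x * ∑ μ, pd (fun y => s y μ) μ x
      = ∑ μ, pd f μ x * pd (fun y => s y μ) ν x) :
    pd (fun y => L (fieldJet φ s y)) ν x
      = pLx L ν (fieldJet φ s x) + pd φ ν x * pLu L (fieldJet φ s x)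
        + (∑ μ, pd (pd φ μ) ν x * pLp L μ (fieldJet φ s x)) + pd f ν x * L (fieldJet φ s x) := by
  rw [← sum_pd_mul_pLs_eq_of_gauge herglotz hgrad hgauge]
  exact pd_lagrangian_comp hL (hφ.differentiable two_ne_zero x)
    (differentiableAt_pi.mpr fun μ => differentiable_pd hφ μ x) hs ν

theorem pd_noether_current {ξ : (Fin d → ℝ) → Fin d → ℝ} {η : (Fin d → ℝ) → ℝ} {ν : Fin d}
    (hL : DifferentiableAt ℝ L (fieldJet φ s x)) (hφ : ContDiff ℝ 2 φ)
    (hs : DifferentiableAt ℝ s x) (hf : DifferentiableAt ℝ f x)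
    (hξ : DifferentiableAt ℝ ξ x) (hη : DifferentiableAt ℝ η x)
    (hP : DifferentiableAt ℝ (fun y => pLp L ν (fieldJet φ s y)) x)
    (herglotz : ∑ μ, pd (fun y => s y μ) μ x = L (fieldJet φ s x))
    (hgrad : ∀ μ, pLs L μ (fieldJet φ s x) = pd f μ x)
    (hgauge : pd f ν x * ∑ μ, pd (fun y => s y μ) μ x
      = ∑ μ, pd f μ x * pd (fun y => s y μ) ν x) :
    pd (fun y => (pLp L ν (fieldJet φ s y) * η y + L (fieldJet φ s y) * ξ y ν
        - pLp L ν (fieldJet φ s y) * ∑ μ, pd φ μ y * ξ y μ) * Real.exp (-f y)) ν x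
      = ((pd (fun y => pLp L ν (fieldJet φ s y)) ν x - pd f ν x * pLp L ν (fieldJet φ s x))
            * (η x - ∑ μ, pd φ μ x * ξ x μ)
          + pLp L ν (fieldJet φ s x) * (pd η ν x
            - ∑ μ, (pd φ μ x * pd (fun y => ξ y μ) ν x + pd (pd φ μ) ν x * ξ x μ))
          + (pLx L ν (fieldJet φ s x) + pd φ ν x * pLu L (fieldJet φ s x)
            + ∑ μ, pd (pd φ μ) ν x * pLp L μ (fieldJet φ s x)) * ξ x ν
          + L (fieldJet φ s x) * pd (fun y => ξ y ν) ν x) * Real.exp (-f x) := by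
  have hLJ : DifferentiableAt ℝ (fun y => L (fieldJet φ s y)) x :=
    hL.comp x (differentiableAt_fieldJet hφ hs)
  have hξc : ∀ μ, DifferentiableAt ℝ (fun y => ξ y μ) x := differentiableAt_pi.mp hξ
  have hpdφ : ∀ μ, DifferentiableAt ℝ (pd φ μ) x := fun μ => differentiable_pd hφ μ x
  have hS : DifferentiableAt ℝ (fun y => ∑ μ, pd φ μ y * ξ y μ) x :=
    DifferentiableAt.fun_sum fun μ _ => (hpdφ μ).fun_mul (hξc μ)
  have hpdS : pd (fun y => ∑ μ, pd φ μ y * ξ y μ) ν x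
      = ∑ μ, (pd φ μ x * pd (fun y => ξ y μ) ν x + pd (pd φ μ) ν x * ξ x μ) := by
    rw [pd_sum fun μ => (hpdφ μ).fun_mul (hξc μ)]
    exact Finset.sum_congr rfl fun μ _ => pd_mul (hpdφ μ) (hξc μ) ν
  have hPηLξ := (hP.fun_mul hη).fun_add (hLJ.fun_mul (hξc ν))
  rw [pd_mul_exp_neg (hPηLξ.fun_sub (hP.fun_mul hS)) hf, pd_sub hPηLξ (hP.fun_mul hS),
    pd_add (hP.fun_mul hη) (hLJ.fun_mul (hξc ν)), pd_mul hP hη, pd_mul hLJ (hξc ν),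
    pd_mul hP hS, hpdS, pd_lagrangian_fieldJet hL hφ hs herglotz hgrad hgauge]
  ring

end Herglotz

/-- **Generalized Noether Theorem for the Herglotz field problem.** Under the Herglotz
field setup, if `φ` satisfies the generalized Euler–Lagrange equation, the infinitesimal
invariance condition holds, and the canonical gauge condition
`∂_ν f Σ_μ ∂_μ s^μ = Σ_μ ∂_μ f ∂_ν s^μ` holds, then the Noether current
`J^ν = (L_{p_ν} η + L ξ^ν − L_{p_ν} Σ_μ ∂_μφ ξ^μ) e^{−f}` is divergence-free. -/
theorem herglotz_generalized_noether
    (d : ℕ) (L : (Fin d → ℝ) × ℝ × (Fin d → ℝ) × (Fin d → ℝ) → ℝ)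
    (hL : ContDiff ℝ 1 L)
    (φ : (Fin d → ℝ) → ℝ) (hφ : ContDiff ℝ 2 φ)
    (s : (Fin d → ℝ) → (Fin d → ℝ)) (hs : ContDiff ℝ 1 s)
    (f : (Fin d → ℝ) → ℝ) (hf : ContDiff ℝ 1 f)
    (z : (Fin d → ℝ) → (Fin d → ℝ) × ℝ × (Fin d → ℝ) × (Fin d → ℝ))
    (hz : z = fun x => (x, φ x, fun ν => pd φ ν x, s x))
    (herglotz : ∀ x, (∑ ν, pd (fun y => s y ν) ν x) = L (z x))
    (hgrad : ∀ (ν : Fin d) (x : Fin d → ℝ), pLs L ν (z x) = pd f ν x)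
    (hdiff : ∀ ν : Fin d, Differentiable ℝ (fun x => pLp L ν (z x)))
    (hEL : ∀ x, pLu L (z x) - (∑ ν, pd (fun y => pLp L ν (z y)) ν x)
      + (∑ ν, pd f ν x * pLp L ν (z x)) = 0)
    (ξ : (Fin d → ℝ) → (Fin d → ℝ)) (hξ : ContDiff ℝ 1 ξ)
    (η : (Fin d → ℝ) → ℝ) (hη : ContDiff ℝ 1 η)
    (hinv : ∀ x, (∑ ν, pLx L ν (z x) * ξ x ν) + pLu L (z x) * η x
      + (∑ ν, pLp L ν (z x) * (pd η ν x - ∑ μ, pd φ μ x * pd (fun y => ξ y μ) ν x))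
      + L (z x) * (∑ ν, pd (fun y => ξ y ν) ν x) = 0)
    (hgauge : ∀ (ν : Fin d) (x : Fin d → ℝ),
      pd f ν x * (∑ μ, pd (fun y => s y μ) μ x) = ∑ μ, pd f μ x * pd (fun y => s y μ) ν x)
    (J : Fin d → (Fin d → ℝ) → ℝ)
    (hJ : J = fun ν y =>
      (pLp L ν (z y) * η y + L (z y) * ξ y ν
        - pLp L ν (z y) * (∑ μ, pd φ μ y * ξ y μ)) * Real.exp (-f y)) :
    ∀ x, (∑ ν, pd (J ν) ν x) = 0 := by
  obtain rfl : z = fieldJet φ s := hz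
  subst hJ
  intro x
  rw [Finset.sum_congr rfl fun ν _ => pd_noether_current (hL.differentiable one_ne_zero _) hφ
      (hs.differentiable one_ne_zero x) (hf.differentiable one_ne_zero x)
      (hξ.differentiable one_ne_zero x) (hη.differentiable one_ne_zero x) (hdiff ν x)
      (herglotz x) (fun μ => hgrad μ x) (hgauge ν x),
    ← Finset.sum_mul, noether_identity (fun μ ν => pd_pd_comm hφ μ ν) (hEL x) (hinv x), zero_mul]
end

section
/- Let μ > 0 and T, γ ∈ ℝ. Let φ : ℝ² → ℝ (coordinates (t,x)) be of class C² and satisfy the damped wave equation μ ∂_{tt}φ − T ∂_{xx}φ + γ ∂_tφ = 0 on ℝ². Let s¹, s² : ℝ² → ℝ be of class C¹ with ∂_t s¹ + ∂_x s² = (μ/2)(∂_tφ)² − (T/2)(∂_xφ)² − (γ/μ)s¹ and ∂_x s¹ = 0 everywhere. Then the local momentum conservation law holds at every point: ∂_t[ μ (∂_tφ)(∂_xφ) e^{(γ/μ)t} ] + ∂_x[ ( −(μ/2)(∂_tφ)² − (T/2)(∂_xφ)² + (γ/μ)s¹ ) e^{(γ/μ)t} ] = 0. -/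
/-- Partial derivative `∂_t g` of a function on the `(t,x)` plane. -/
noncomputable def ptd (g : ℝ × ℝ → ℝ) (p : ℝ × ℝ) : ℝ :=
  deriv (fun τ => g (τ, p.2)) p.1

/-- Partial derivative `∂_x g` of a function on the `(t,x)` plane. -/
noncomputable def pxd (g : ℝ × ℝ → ℝ) (p : ℝ × ℝ) : ℝ :=
  deriv (fun y => g (p.1, y)) p.2

/-! The momentum density `m = μ φ_t φ_x` satisfies `m_t = μ φ_tt φ_x + μ φ_t φ_xt` and the flux
`−(μ/2) φ_t² − (T/2) φ_x²` has `x`-derivative `−μ φ_t φ_tx − T φ_x φ_xx`. Once `φ_xt = φ_tx`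
(Schwarz), the mixed terms cancel and what is left is `φ_x (μ φ_tt − T φ_xx)`, which the damped wave
equation turns into `−γ φ_t φ_x`. The integrating factor `e^{(γ/μ)t}` contributes exactly
`+γ φ_t φ_x` to the time derivative, and the gauge `∂_x s¹ = 0` kills the contribution of the
`(γ/μ) s¹` term to the flux. -/

section PartialDerivatives

variable {g : ℝ × ℝ → ℝ} {g' : ℝ × ℝ →L[ℝ] ℝ} {p : ℝ × ℝ}

theorem HasFDerivAt.hasDerivAt_fst_slice (h : HasFDerivAt g g' p) :
    HasDerivAt (fun τ => g (τ, p.2)) (g' (1, 0)) p.1 :=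
  h.comp_hasDerivAt (f := fun τ : ℝ => (τ, p.2)) p.1 ((hasDerivAt_id _).prodMk (hasDerivAt_const _ _))

theorem HasFDerivAt.hasDerivAt_snd_slice (h : HasFDerivAt g g' p) :
    HasDerivAt (fun y => g (p.1, y)) (g' (0, 1)) p.2 :=
  h.comp_hasDerivAt (f := fun y : ℝ => (p.1, y)) p.2 ((hasDerivAt_const _ _).prodMk (hasDerivAt_id _))

theorem HasFDerivAt.ptd_eq (h : HasFDerivAt g g' p) : ptd g p = g' (1, 0) :=
  h.hasDerivAt_fst_slice.deriv

theorem HasFDerivAt.pxd_eq (h : HasFDerivAt g g' p) : pxd g p = g' (0, 1) :=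
  h.hasDerivAt_snd_slice.deriv

theorem DifferentiableAt.hasDerivAt_ptd (h : DifferentiableAt ℝ g p) :
    HasDerivAt (fun τ => g (τ, p.2)) (ptd g p) p.1 := by
  simpa only [h.hasFDerivAt.ptd_eq] using h.hasFDerivAt.hasDerivAt_fst_slice

theorem DifferentiableAt.hasDerivAt_pxd (h : DifferentiableAt ℝ g p) :
    HasDerivAt (fun y => g (p.1, y)) (pxd g p) p.2 := by
  simpa only [h.hasFDerivAt.pxd_eq] using h.hasFDerivAt.hasDerivAt_snd_slice

theorem ptd_eq_fderiv_apply (h : Differentiable ℝ g) : ptd g = fun q => fderiv ℝ g q (1, 0) :=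
  funext fun q => (h q).hasFDerivAt.ptd_eq

theorem pxd_eq_fderiv_apply (h : Differentiable ℝ g) : pxd g = fun q => fderiv ℝ g q (0, 1) :=
  funext fun q => (h q).hasFDerivAt.pxd_eq

theorem ContDiff.ptd {n : WithTop ℕ∞} (h : ContDiff ℝ (n + 1) g) : ContDiff ℝ n (ptd g) := by
  rw [ptd_eq_fderiv_apply (h.differentiable (by simp))]
  exact (h.fderiv_right le_rfl).clm_apply contDiff_const

theorem ContDiff.pxd {n : WithTop ℕ∞} (h : ContDiff ℝ (n + 1) g) : ContDiff ℝ n (pxd g) := by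
  rw [pxd_eq_fderiv_apply (h.differentiable (by simp))]
  exact (h.fderiv_right le_rfl).clm_apply contDiff_const

theorem ptd_pxd_comm (h : ContDiff ℝ 2 g) (p : ℝ × ℝ) : ptd (pxd g) p = pxd (ptd g) p := by
  have hg : Differentiable ℝ g := h.differentiable (by norm_num)
  have hA : HasFDerivAt (fderiv ℝ g) (fderiv ℝ (fderiv ℝ g) p) p :=
    ((h.fderiv_right (m := 1) le_rfl).differentiable one_ne_zero p).hasFDerivAt
  rw [ptd_eq_fderiv_apply hg, pxd_eq_fderiv_apply hg,
    (hA.clm_apply (hasFDerivAt_const _ _)).ptd_eq, (hA.clm_apply (hasFDerivAt_const _ _)).pxd_eq]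
  simpa using h.contDiffAt.isSymmSndFDerivAt (by simp) (1, 0) (0, 1)

end PartialDerivatives

section Densities

variable {u v s : ℝ × ℝ → ℝ} {p : ℝ × ℝ}

theorem ptd_mul_mul_exp (hu : DifferentiableAt ℝ u p) (hv : DifferentiableAt ℝ v p) (a k : ℝ) :
    ptd (fun q => a * u q * v q * Real.exp (k * q.1)) p
      = (a * (ptd u p * v p + u p * ptd v p) + k * a * u p * v p) * Real.exp (k * p.1) := by
  have hexp : HasDerivAt (fun τ => Real.exp (k * τ)) (Real.exp (k * p.1) * (k * 1)) p.1 :=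
    ((hasDerivAt_id p.1).const_mul k).exp
  exact (((hu.hasDerivAt_ptd.const_mul a).mul hv.hasDerivAt_ptd).mul hexp).deriv.trans (by simp only [Pi.mul_apply]; ring)

theorem pxd_quadratic_mul_exp (hu : DifferentiableAt ℝ u p) (hv : DifferentiableAt ℝ v p)
    (hs : DifferentiableAt ℝ s p) (a b c k : ℝ) :
    pxd (fun q => (a * u q ^ 2 - b * v q ^ 2 + c * s q) * Real.exp (k * q.1)) p
      = (2 * a * u p * pxd u p - 2 * b * v p * pxd v p + c * pxd s p) * Real.exp (k * p.1) := by
  have hflux := (((hu.hasDerivAt_pxd.pow 2).const_mul a).sub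
    ((hv.hasDerivAt_pxd.pow 2).const_mul b)).add (hs.hasDerivAt_pxd.const_mul c)
  exact (hflux.mul_const (Real.exp (k * p.1))).deriv.trans (by push_cast; ring)

end Densities

theorem vibrating_string_local_momentum_conservation_general
    (μ T γ : ℝ) (hμ : 0 < μ)
    (φ : ℝ × ℝ → ℝ) (hφ : ContDiff ℝ 2 φ)
    (hwave : ∀ p : ℝ × ℝ, μ * ptd (ptd φ) p - T * pxd (pxd φ) p + γ * ptd φ p = 0)
    (s1 : ℝ × ℝ → ℝ) (hs1 : ContDiff ℝ 1 s1)
    (hgauge : ∀ p : ℝ × ℝ, pxd s1 p = 0) :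
    ∀ p : ℝ × ℝ,
      ptd (fun q => μ * ptd φ q * pxd φ q * Real.exp (γ / μ * q.1)) p
        + pxd (fun q => (-(μ / 2) * (ptd φ q) ^ 2 - T / 2 * (pxd φ q) ^ 2 + γ / μ * s1 q)
            * Real.exp (γ / μ * q.1)) p = 0 := by
  intro p
  have hφt : DifferentiableAt ℝ (ptd φ) p := (hφ.ptd (n := 1)).differentiable one_ne_zero p
  have hφx : DifferentiableAt ℝ (pxd φ) p := (hφ.pxd (n := 1)).differentiable one_ne_zero p
  rw [ptd_mul_mul_exp hφt hφx, pxd_quadratic_mul_exp hφt hφx (hs1.differentiable one_ne_zero p),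
    hgauge p, ptd_pxd_comm hφ]
  linear_combination Real.exp (γ / μ * p.1) * pxd φ p * hwave p
    + Real.exp (γ / μ * p.1) * ptd φ p * pxd φ p * div_mul_cancel₀ γ hμ.ne'

/-- **Local momentum conservation for the damped vibrating string.** If
`μ ∂_{tt}φ − T ∂_{xx}φ + γ ∂_tφ = 0`,
`∂_t s¹ + ∂_x s² = (μ/2)(∂_tφ)² − (T/2)(∂_xφ)² − (γ/μ)s¹` and `∂_x s¹ = 0`, then
`∂_t[μ(∂_tφ)(∂_xφ)e^{(γ/μ)t}] + ∂_x[(−(μ/2)(∂_tφ)² − (T/2)(∂_xφ)² + (γ/μ)s¹)e^{(γ/μ)t}] = 0`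
at every point. -/
theorem vibrating_string_local_momentum_conservation
    (μ T γ : ℝ) (hμ : 0 < μ)
    (φ : ℝ × ℝ → ℝ) (hφ : ContDiff ℝ 2 φ)
    (hwave : ∀ p : ℝ × ℝ, μ * ptd (ptd φ) p - T * pxd (pxd φ) p + γ * ptd φ p = 0)
    (s1 s2 : ℝ × ℝ → ℝ) (hs1 : ContDiff ℝ 1 s1) (hs2 : ContDiff ℝ 1 s2)
    (hseq : ∀ p : ℝ × ℝ,
      ptd s1 p + pxd s2 p = μ / 2 * (ptd φ p) ^ 2 - T / 2 * (pxd φ p) ^ 2 - γ / μ * s1 p)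
    (hgauge : ∀ p : ℝ × ℝ, pxd s1 p = 0) :
    ∀ p : ℝ × ℝ,
      ptd (fun q => μ * ptd φ q * pxd φ q * Real.exp (γ / μ * q.1)) p
        + pxd (fun q => (-(μ / 2) * (ptd φ q) ^ 2 - T / 2 * (pxd φ q) ^ 2 + γ / μ * s1 q)
            * Real.exp (γ / μ * q.1)) p = 0 :=
  vibrating_string_local_momentum_conservation_general μ T γ hμ φ hφ hwave s1 hs1 hgauge
end
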